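/- Let α, β, γ ∈ ℂ with α + β + γ = 0 and Re α = Re β = Re γ = 0, let σ > 0, and for n ∈ ℕ and y > 0 define Iₙ(y) = (1/(2π))·∫_{−∞}^{∞} [Γ((σ+it−3α/2)/2)·Γ((σ+it−β−α/2)/2)·Γ((σ+it−γ−α/2)/2) / Γ((σ+it−3α/2)/2 − n)] · (πy)^{−σ−it} dt. Then each Iₙ is differentiable on (0,∞) and satisfies the recurrence I_{n+1}(y) = −(1/2)·( y·Iₙ′(y) + (3α/2 + 2n + 2)·Iₙ(y) ) for all y > 0. -/

import Mathlib

open MeasureTheory Real Set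

/-- The Barnes-type integral `Iₙ(y)` appearing in the power series expansion of Jacquet's
Whittaker function for a small argument. -/
noncomputable def barnesI (α β γ : ℂ) (σ : ℝ) (n : ℕ) (y : ℝ) : ℂ :=
  (1 / (2 * π)) * ∫ t : ℝ,
    Complex.Gamma ((((σ : ℂ) + Complex.I * t) - 3 * α / 2) / 2)
      * Complex.Gamma ((((σ : ℂ) + Complex.I * t) - β - α / 2) / 2)
      * Complex.Gamma ((((σ : ℂ) + Complex.I * t) - γ - α / 2) / 2)
      / Complex.Gamma ((((σ : ℂ) + Complex.I * t) - 3 * α / 2) / 2 - n)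
      * ((π * y : ℝ) : ℂ) ^ (-(σ : ℂ) - Complex.I * t)

namespace BarnesRecAux

/-! ### Elementary Gamma function bounds -/

lemma norm_Gamma_le {z : ℂ} (hz : 0 < z.re) : ‖Complex.Gamma z‖ ≤ Real.Gamma z.re := by
  rw [Complex.Gamma_eq_integral hz, Real.Gamma_eq_integral hz]
  dsimp only [Complex.GammaIntegral]
  refine (norm_integral_le_integral_norm _).trans_eq ?_
  refine setIntegral_congr_fun measurableSet_Ioi fun x hx => ?_
  rw [norm_mul, Complex.norm_real, Real.norm_eq_abs,
    abs_of_nonneg (Real.exp_pos _).le, Complex.norm_cpow_eq_rpow_re_of_pos hx,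
    Complex.sub_re, Complex.one_re]

lemma gamma_poly_bound (k : ℕ) : ∀ z : ℂ, 0 < z.re →
    ‖Complex.Gamma z‖ * |z.im| ^ k ≤ Real.Gamma (z.re + k) := by
  induction k with
  | zero => intro z hz; simpa using norm_Gamma_le hz
  | succ k ih =>
    intro z hz
    have hz0 : z ≠ 0 := by
      intro h; rw [h] at hz; simp at hz
    have hrec : ‖Complex.Gamma (z + 1)‖ = ‖z‖ * ‖Complex.Gamma z‖ := by
      rw [Complex.Gamma_add_one z hz0, norm_mul]
    have him : |z.im| ≤ ‖z‖ := Complex.abs_im_le_norm z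
    have h1 : ‖Complex.Gamma (z + 1)‖ * |(z + 1).im| ^ k ≤ Real.Gamma ((z + 1).re + k) :=
      ih (z + 1) (by simp only [Complex.add_re, Complex.one_re]; linarith)
    have him1 : (z + 1).im = z.im := by simp
    have hre1 : (z + 1).re = z.re + 1 := by simp
    rw [him1, hre1, hrec] at h1
    have key : ‖Complex.Gamma z‖ * |z.im| ^ (k + 1) ≤ ‖z‖ * ‖Complex.Gamma z‖ * |z.im| ^ k := by
      rw [pow_succ]
      have h2 : ‖Complex.Gamma z‖ * (|z.im| ^ k * |z.im|)
          ≤ ‖Complex.Gamma z‖ * (|z.im| ^ k * ‖z‖) := by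
        gcongr
      calc ‖Complex.Gamma z‖ * (|z.im| ^ k * |z.im|)
          ≤ ‖Complex.Gamma z‖ * (|z.im| ^ k * ‖z‖) := h2
        _ = ‖z‖ * ‖Complex.Gamma z‖ * |z.im| ^ k := by ring
    refine key.trans (h1.trans_eq ?_)
    push_cast; ring_nf

lemma one_add_abs_pow_bound (k : ℕ) {x : ℝ} (hx : 0 ≤ x) :
    (1 + x) ^ k ≤ 2 ^ k * (1 + x ^ k) := by
  rcases le_total x 1 with h | h
  · calc (1 + x) ^ k ≤ 2 ^ k := by
          apply pow_le_pow_left₀ (by linarith) (by linarith)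
      _ ≤ 2 ^ k * (1 + x ^ k) := by
          nlinarith [pow_nonneg hx k, pow_pos (show (0:ℝ) < 2 by norm_num) k]
  · calc (1 + x) ^ k ≤ (2 * x) ^ k := by
          apply pow_le_pow_left₀ (by linarith) (by linarith)
      _ = 2 ^ k * x ^ k := by rw [mul_pow]
      _ ≤ 2 ^ k * (1 + x ^ k) := by
          nlinarith [pow_nonneg hx k, pow_pos (show (0:ℝ) < 2 by norm_num) k]

lemma gamma_one_add_bound (k : ℕ) {z : ℂ} (hz : 0 < z.re) :
    ‖Complex.Gamma z‖ * (1 + |z.im|) ^ k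
      ≤ 2 ^ k * (Real.Gamma z.re + Real.Gamma (z.re + k)) := by
  have h1 : (1 + |z.im|) ^ k ≤ 2 ^ k * (1 + |z.im| ^ k) :=
    one_add_abs_pow_bound k (abs_nonneg _)
  have h2 : ‖Complex.Gamma z‖ * (2 ^ k * (1 + |z.im| ^ k))
      = 2 ^ k * (‖Complex.Gamma z‖ + ‖Complex.Gamma z‖ * |z.im| ^ k) := by ring
  calc ‖Complex.Gamma z‖ * (1 + |z.im|) ^ k
      ≤ ‖Complex.Gamma z‖ * (2 ^ k * (1 + |z.im| ^ k)) := by gcongr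
    _ = 2 ^ k * (‖Complex.Gamma z‖ + ‖Complex.Gamma z‖ * |z.im| ^ k) := h2
    _ ≤ 2 ^ k * (Real.Gamma z.re + Real.Gamma (z.re + k)) := by
        gcongr
        · exact norm_Gamma_le hz
        · exact gamma_poly_bound k z hz

/-! ### The integrand -/

noncomputable def bA (α : ℂ) (σ : ℝ) (t : ℝ) : ℂ :=
  (((σ : ℂ) + Complex.I * t) - 3 * α / 2) / 2

noncomputable def bB (α β : ℂ) (σ : ℝ) (t : ℝ) : ℂ :=
  (((σ : ℂ) + Complex.I * t) - β - α / 2) / 2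

noncomputable def bC (α γ : ℂ) (σ : ℝ) (t : ℝ) : ℂ :=
  (((σ : ℂ) + Complex.I * t) - γ - α / 2) / 2

noncomputable def bG (α β γ : ℂ) (σ : ℝ) (n : ℕ) (t : ℝ) : ℂ :=
  Complex.Gamma (bA α σ t) * Complex.Gamma (bB α β σ t) * Complex.Gamma (bC α γ σ t)
    / Complex.Gamma (bA α σ t - n)

lemma bA_re (α : ℂ) (hα : α.re = 0) (σ t : ℝ) : (bA α σ t).re = σ / 2 := by
  simp [bA, Complex.div_re, Complex.normSq, hα]

lemma bB_re (α β : ℂ) (hα : α.re = 0) (hβ : β.re = 0) (σ t : ℝ) : (bB α β σ t).re = σ / 2 := by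
  simp [bB, Complex.div_re, Complex.normSq, hα, hβ]

lemma bC_re (α γ : ℂ) (hα : α.re = 0) (hγ : γ.re = 0) (σ t : ℝ) : (bC α γ σ t).re = σ / 2 := by
  simp [bC, Complex.div_re, Complex.normSq, hα, hγ]

lemma bC_im (α γ : ℂ) (σ t : ℝ) : (bC α γ σ t).im = (t - (γ + α / 2).im) / 2 := by
  simp [bC, Complex.div_im, Complex.normSq]; ring

lemma ne_neg_nat {z : ℂ} (hz : 0 < z.re) : ∀ m : ℕ, z ≠ -m := by
  intro m h
  have : z.re = -(m : ℝ) := by rw [h]; simp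
  rw [this] at hz
  have : (0:ℝ) ≤ m := Nat.cast_nonneg m
  linarith

lemma inv_Gamma_step (z : ℂ) : (Complex.Gamma z)⁻¹ = z * (Complex.Gamma (z + 1))⁻¹ := by
  by_cases hz : z = 0
  · simp [hz, Complex.Gamma_zero]
  · rw [Complex.Gamma_add_one z hz]
    by_cases hG : Complex.Gamma z = 0
    · simp [hG]
    · field_simp

lemma bG_succ (α β γ : ℂ) (σ : ℝ) (n : ℕ) (t : ℝ) :
    bG α β γ σ (n + 1) t = bG α β γ σ n t * (bA α σ t - 1 - n) := by
  have h1 : (Complex.Gamma (bA α σ t - (n + 1 : ℕ)))⁻¹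
      = (bA α σ t - 1 - n) * (Complex.Gamma (bA α σ t - n))⁻¹ := by
    have := inv_Gamma_step (bA α σ t - (n + 1 : ℕ))
    rw [this]
    push_cast
    ring_nf
  rw [bG, bG, div_eq_mul_inv, div_eq_mul_inv, h1]
  ring

lemma bG_eq (α β γ : ℂ) (σ : ℝ) (hα : α.re = 0) (hσ : 0 < σ) (n : ℕ) (t : ℝ) :
    bG α β γ σ n t = Complex.Gamma (bB α β σ t) * Complex.Gamma (bC α γ σ t)
      * ∏ j ∈ Finset.range n, (bA α σ t - 1 - j) := by
  induction n with
  | zero =>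
    have hA : Complex.Gamma (bA α σ t) ≠ 0 :=
      Complex.Gamma_ne_zero (ne_neg_nat (by rw [bA_re α hα]; linarith))
    simp only [bG, Nat.cast_zero, sub_zero, Finset.range_zero, Finset.prod_empty, mul_one]
    field_simp
  | succ n ih =>
    rw [bG_succ, ih, Finset.prod_range_succ]
    ring

/-! ### Continuity -/

lemma continuous_bA (α : ℂ) (σ : ℝ) : Continuous (bA α σ) := by
  unfold bA; fun_prop

lemma continuous_bB (α β : ℂ) (σ : ℝ) : Continuous (bB α β σ) := by
  unfold bB; fun_prop

lemma continuous_bC (α γ : ℂ) (σ : ℝ) : Continuous (bC α γ σ) := by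
  unfold bC; fun_prop

lemma continuous_Gamma_comp {f : ℝ → ℂ} (hf : Continuous f) (hx : ∀ t, 0 < (f t).re) :
    Continuous fun t => Complex.Gamma (f t) := by
  rw [continuous_iff_continuousAt]
  intro t
  exact (Complex.differentiableAt_Gamma _ (ne_neg_nat (hx t))).continuousAt.comp hf.continuousAt

lemma continuous_bG (α β γ : ℂ) (σ : ℝ) (hα : α.re = 0) (hβ : β.re = 0) (hγ : γ.re = 0)
    (hσ : 0 < σ) (n : ℕ) : Continuous (bG α β γ σ n) := by
  unfold bG
  simp only [div_eq_mul_inv]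
  refine Continuous.mul ?_ ?_
  · refine Continuous.mul (Continuous.mul ?_ ?_) ?_
    · exact continuous_Gamma_comp (continuous_bA α σ)
        (fun t => by rw [bA_re α hα]; linarith)
    · exact continuous_Gamma_comp (continuous_bB α β σ)
        (fun t => by rw [bB_re α β hα hβ]; linarith)
    · exact continuous_Gamma_comp (continuous_bC α γ σ)
        (fun t => by rw [bC_re α γ hα hγ]; linarith)
  · have h : Continuous fun t : ℝ => bA α σ t - n := by
      have := continuous_bA α σ; fun_prop
    exact Complex.differentiable_one_div_Gamma.continuous.comp h

/-! ### Decay bound -/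

lemma Gamma_half_pos {σ : ℝ} (hσ : 0 < σ) : 0 < Real.Gamma (σ / 2) :=
  Real.Gamma_pos_of_pos (by linarith)

lemma bG_norm_bound (α β γ : ℂ) (σ : ℝ) (hα : α.re = 0) (hβ : β.re = 0) (hγ : γ.re = 0)
    (hσ : 0 < σ) (n m : ℕ) :
    ∃ C : ℝ, 0 ≤ C ∧ ∀ t : ℝ, ‖bG α β γ σ n t‖ * (1 + |t|) ^ m ≤ C := by
  set d : ℝ := (γ + α / 2).im with hd
  obtain ⟨K, hK1, hbA⟩ : ∃ K : ℝ, 1 ≤ K ∧ ∀ t : ℝ, ‖bA α σ t‖ + 1 + n ≤ K * (1 + |t|) := by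
    refine ⟨(σ + 3 * ‖α‖ / 2) / 2 + 1 + n, ?_, fun t => ?_⟩
    · have h0 : (0:ℝ) ≤ (σ + 3 * ‖α‖ / 2) / 2 := by positivity
      have h0' : (0:ℝ) ≤ n := Nat.cast_nonneg n
      linarith
    · have h1 : ‖bA α σ t‖ ≤ (σ + |t| + 3 * ‖α‖ / 2) / 2 := by
        rw [bA]
        rw [norm_div]
        have : ‖((σ:ℂ) + Complex.I * t) - 3 * α / 2‖ ≤ σ + |t| + 3 * ‖α‖ / 2 := by
          refine (norm_sub_le _ _).trans ?_
          have h2 : ‖(σ:ℂ) + Complex.I * t‖ ≤ σ + |t| := by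
            refine (norm_add_le _ _).trans ?_
            simp [abs_of_pos hσ]
          have h3 : ‖3 * α / 2‖ = 3 * ‖α‖ / 2 := by
            rw [norm_div, norm_mul]; simp
          linarith
        calc ‖(σ:ℂ) + Complex.I * ↑t - 3 * α / 2‖ / ‖(2:ℂ)‖
            = ‖(σ:ℂ) + Complex.I * ↑t - 3 * α / 2‖ / 2 := by norm_num
          _ ≤ (σ + |t| + 3 * ‖α‖ / 2) / 2 := by linarith
      have habs : 0 ≤ |t| := abs_nonneg t
      nlinarith [mul_nonneg (show (0:ℝ) ≤ (σ + 3 * ‖α‖ / 2) / 2 by positivity) habs,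
        mul_nonneg (show (0:ℝ) ≤ (n:ℝ) from Nat.cast_nonneg n) habs]
  have hK0 : (0:ℝ) ≤ K := by linarith
  have hprod : ∀ t : ℝ, ‖∏ j ∈ Finset.range n, (bA α σ t - 1 - j)‖ ≤ (K * (1 + |t|)) ^ n := by
    intro t
    rw [norm_prod]
    calc ∏ j ∈ Finset.range n, ‖bA α σ t - 1 - (j:ℂ)‖
        ≤ ∏ _j ∈ Finset.range n, (K * (1 + |t|)) := by
          refine Finset.prod_le_prod (fun j _ => norm_nonneg _) (fun j hj => ?_)
          have hj' : (j:ℝ) ≤ n := by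
            have := Finset.mem_range.mp hj; exact_mod_cast this.le
          have : ‖bA α σ t - 1 - (j:ℂ)‖ ≤ ‖bA α σ t - 1‖ + ‖(j:ℂ)‖ := norm_sub_le _ _
          have h2 : ‖bA α σ t - 1‖ ≤ ‖bA α σ t‖ + 1 := by
            refine (norm_sub_le _ _).trans ?_; simp
          have h3 : ‖(j:ℂ)‖ = (j:ℝ) := by simp
          have := hbA t
          linarith
      _ = (K * (1 + |t|)) ^ n := by rw [Finset.prod_const, Finset.card_range]
  have htrans : ∀ t : ℝ, 1 + |t| ≤ 2 * (1 + |d|) * (1 + |(bC α γ σ t).im|) := by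
    intro t
    rw [bC_im]
    have h1 : |t| ≤ |t - d| + |d| := by
      calc |t| = |(t - d) + d| := by ring_nf
        _ ≤ |t - d| + |d| := abs_add_le _ _
    have h2 : |t - d| = 2 * |(t - d) / 2| := by
      rw [abs_div]; norm_num; ring
    nlinarith [abs_nonneg d, abs_nonneg ((t - d)/2),
      mul_nonneg (abs_nonneg d) (abs_nonneg ((t-d)/2))]
  set k := n + m with hk
  set C : ℝ := Real.Gamma (σ/2) * K ^ n * (2 * (1 + |d|)) ^ k
      * (2 ^ k * (Real.Gamma (σ/2) + Real.Gamma (σ/2 + k))) with hC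
  have hC0 : 0 ≤ C := by
    have g1 := (Gamma_half_pos hσ).le
    have g2 := (Real.Gamma_pos_of_pos (show (0:ℝ) < σ/2 + k by positivity)).le
    positivity
  refine ⟨C, hC0, fun t => ?_⟩
  have hBre : 0 < (bB α β σ t).re := by rw [bB_re α β hα hβ]; linarith
  have hCre : 0 < (bC α γ σ t).re := by rw [bC_re α γ hα hγ]; linarith
  have hB := norm_Gamma_le hBre
  rw [bB_re α β hα hβ] at hB
  have hGC := gamma_one_add_bound k hCre
  rw [bC_re α γ hα hγ] at hGC
  have hCnorm : 0 ≤ ‖Complex.Gamma (bC α γ σ t)‖ := norm_nonneg _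
  have h1t : (0:ℝ) ≤ 1 + |t| := by positivity
  calc ‖bG α β γ σ n t‖ * (1 + |t|) ^ m
      = ‖Complex.Gamma (bB α β σ t)‖ * ‖Complex.Gamma (bC α γ σ t)‖
        * ‖∏ j ∈ Finset.range n, (bA α σ t - 1 - (j:ℂ))‖ * (1 + |t|) ^ m := by
        rw [bG_eq α β γ σ hα hσ, norm_mul, norm_mul]
    _ ≤ Real.Gamma (σ/2) * ‖Complex.Gamma (bC α γ σ t)‖
        * (K * (1 + |t|)) ^ n * (1 + |t|) ^ m := by
        gcongr <;> first
          | exact hB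
          | exact hprod t
          | exact (Gamma_half_pos hσ).le
          | positivity
    _ = (Real.Gamma (σ/2) * K ^ n) * (‖Complex.Gamma (bC α γ σ t)‖ * (1 + |t|) ^ k) := by
        rw [hk, mul_pow, pow_add]; ring
    _ ≤ (Real.Gamma (σ/2) * K ^ n)
        * (‖Complex.Gamma (bC α γ σ t)‖
            * (2 * (1 + |d|) * (1 + |(bC α γ σ t).im|)) ^ k) := by
        gcongr <;> first
          | exact htrans t
          | exact mul_nonneg (Gamma_half_pos hσ).le (pow_nonneg hK0 n)
          | positivity
    _ = (Real.Gamma (σ/2) * K ^ n) * (2 * (1 + |d|)) ^ k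
        * (‖Complex.Gamma (bC α γ σ t)‖ * (1 + |(bC α γ σ t).im|) ^ k) := by
        rw [mul_pow]; ring
    _ ≤ (Real.Gamma (σ/2) * K ^ n) * (2 * (1 + |d|)) ^ k
        * (2 ^ k * (Real.Gamma (σ/2) + Real.Gamma (σ/2 + k))) := by
        gcongr <;> first
          | exact hGC
          | exact mul_nonneg (mul_nonneg (Gamma_half_pos hσ).le (pow_nonneg hK0 n))
              (by positivity)
          | positivity
    _ = C := by rw [hC]

lemma integrable_bG_mul (α β γ : ℂ) (σ : ℝ) (hα : α.re = 0) (hβ : β.re = 0) (hγ : γ.re = 0)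
    (hσ : 0 < σ) (n m : ℕ) {φ : ℝ → ℂ} (hφc : Continuous φ) {K : ℝ} (hK : 0 ≤ K)
    (hφ : ∀ t, ‖φ t‖ ≤ K * (1 + |t|) ^ m) :
    Integrable fun t => bG α β γ σ n t * φ t := by
  obtain ⟨C, hC0, hC⟩ := bG_norm_bound α β γ σ hα hβ hγ hσ n (m + 2)
  refine Integrable.mono' (g := fun t => (K * C) * (1 + t ^ 2)⁻¹)
    (integrable_inv_one_add_sq.const_mul (K * C))
    ((continuous_bG α β γ σ hα hβ hγ hσ n).mul hφc).aestronglyMeasurable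
    (ae_of_all _ fun t => ?_)
  rw [norm_mul]
  have h1t : (0:ℝ) < 1 + |t| := by positivity
  have hsq : (0:ℝ) < 1 + t ^ 2 := by positivity
  have h1 : ‖bG α β γ σ n t‖ * (1 + |t|) ^ m * (1 + t ^ 2) ≤ C := by
    have h2 : (1 + t ^ 2) ≤ (1 + |t|) ^ 2 := by nlinarith [abs_nonneg t, sq_abs t]
    calc ‖bG α β γ σ n t‖ * (1 + |t|) ^ m * (1 + t ^ 2)
        ≤ ‖bG α β γ σ n t‖ * (1 + |t|) ^ m * (1 + |t|) ^ 2 := by gcongr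
      _ = ‖bG α β γ σ n t‖ * (1 + |t|) ^ (m + 2) := by rw [pow_add]; ring
      _ ≤ C := hC t
  have h3 : ‖bG α β γ σ n t‖ * (1 + |t|) ^ m ≤ C * (1 + t ^ 2)⁻¹ := by
    rw [← le_div_iff₀ hsq] at h1
    rwa [div_eq_mul_inv] at h1
  calc ‖bG α β γ σ n t‖ * ‖φ t‖
      ≤ ‖bG α β γ σ n t‖ * (K * (1 + |t|) ^ m) := by gcongr; exact hφ t
    _ = K * (‖bG α β γ σ n t‖ * (1 + |t|) ^ m) := by ring
    _ ≤ K * (C * (1 + t ^ 2)⁻¹) := by gcongr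
    _ = K * C * (1 + t ^ 2)⁻¹ := by ring

lemma integrable_norm_bG (α β γ : ℂ) (σ : ℝ) (hα : α.re = 0) (hβ : β.re = 0) (hγ : γ.re = 0)
    (hσ : 0 < σ) (n m : ℕ) :
    Integrable fun t => ‖bG α β γ σ n t‖ * (1 + |t|) ^ m := by
  have key : ∀ t : ℝ, ‖(((1 + |t|) ^ m : ℝ) : ℂ)‖ = (1 + |t|) ^ m := fun t => by
    rw [Complex.norm_real]
    exact abs_of_nonneg (by positivity)
  have h := integrable_bG_mul α β γ σ hα hβ hγ hσ n m
    (φ := fun t => (((1 + |t|) ^ m : ℝ) : ℂ)) (by fun_prop) (K := 1) zero_le_one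
    (fun t => by rw [key t, one_mul])
  refine h.norm.congr (Filter.Eventually.of_forall fun t => ?_)
  show ‖bG α β γ σ n t * (((1 + |t|) ^ m : ℝ) : ℂ)‖ = ‖bG α β γ σ n t‖ * (1 + |t|) ^ m
  rw [norm_mul, key t]

/-! ### Derivative of the integral -/

lemma hasDerivAt_cpow_pi_mul (w : ℂ) {u : ℝ} (hu : 0 < u) :
    HasDerivAt (fun y : ℝ => ((π * y : ℝ) : ℂ) ^ w)
      (w / u * ((π * u : ℝ) : ℂ) ^ w) u := by
  have hπu : 0 < π * u := mul_pos Real.pi_pos hu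
  have hlog : HasDerivAt (fun y : ℝ => Real.log (π * y)) (1 / u) u := by
    have h1 : HasDerivAt (fun y : ℝ => π * y) π u := by
      simpa using (hasDerivAt_id u).const_mul π
    have h2 := (Real.hasDerivAt_log hπu.ne').comp u h1
    refine h2.congr_deriv ?_
    field_simp
  have hexp : HasDerivAt (fun y : ℝ => Complex.exp (w * (Real.log (π * y) : ℂ)))
      (Complex.exp (w * (Real.log (π * u) : ℂ)) * (w * ((1 / u : ℝ) : ℂ))) u := by
    have h3 : HasDerivAt (fun y : ℝ => ((Real.log (π * y) : ℝ) : ℂ)) ((1 / u : ℝ) : ℂ) u :=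
      hlog.ofReal_comp
    exact (h3.const_mul w).cexp
  have heq : ∀ y : ℝ, 0 < y →
      ((π * y : ℝ) : ℂ) ^ w = Complex.exp (w * (Real.log (π * y) : ℂ)) := by
    intro y hy
    have hπy : 0 < π * y := mul_pos Real.pi_pos hy
    rw [Complex.cpow_def_of_ne_zero (by exact_mod_cast hπy.ne'), Complex.ofReal_log hπy.le,
      mul_comm]
  have hev : (fun y : ℝ => ((π * y : ℝ) : ℂ) ^ w)
      =ᶠ[nhds u] fun y : ℝ => Complex.exp (w * (Real.log (π * y) : ℂ)) := by
    filter_upwards [IsOpen.mem_nhds isOpen_Ioi (show u ∈ Ioi (0:ℝ) from hu)] with y hy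
    exact heq y hy
  have hder := hexp.congr_of_eventuallyEq hev
  refine hder.congr_deriv ?_
  rw [← heq u hu]
  push_cast
  field_simp

lemma norm_cpow_pi_mul {y : ℝ} (hy : 0 < y) (σ t : ℝ) :
    ‖((π * y : ℝ) : ℂ) ^ (-(σ : ℂ) - Complex.I * t)‖ = (π * y) ^ (-σ) := by
  rw [Complex.norm_cpow_eq_rpow_re_of_pos (mul_pos Real.pi_pos hy)]
  congr 1
  simp

lemma norm_w_le (σ t : ℝ) (hσ : 0 < σ) : ‖-(σ : ℂ) - Complex.I * t‖ ≤ (σ + 1) * (1 + |t|) := by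
  have h1 : ‖-(σ : ℂ) - Complex.I * t‖ ≤ σ + |t| := by
    calc ‖-(σ : ℂ) - Complex.I * t‖ = ‖(σ : ℂ) + Complex.I * t‖ := by
          rw [show -(σ : ℂ) - Complex.I * t = -((σ : ℂ) + Complex.I * t) by ring, norm_neg]
      _ ≤ ‖(σ : ℂ)‖ + ‖Complex.I * t‖ := norm_add_le _ _
      _ = σ + |t| := by simp [abs_of_pos hσ]
  nlinarith [abs_nonneg t]

lemma continuous_w_cpow {y : ℝ} (hy : 0 < y) (σ : ℝ) :
    Continuous fun t : ℝ => ((π * y : ℝ) : ℂ) ^ (-(σ : ℂ) - Complex.I * t) := by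
  refine Continuous.const_cpow (by fun_prop) (Or.inl ?_)
  exact_mod_cast (mul_pos Real.pi_pos hy).ne'

lemma barnesI_hasDerivAt (α β γ : ℂ) (σ : ℝ) (hα : α.re = 0) (hβ : β.re = 0) (hγ : γ.re = 0)
    (hσ : 0 < σ) (n : ℕ) {y : ℝ} (hy : 0 < y) :
    HasDerivAt (barnesI α β γ σ n)
      ((1 / (2 * (π : ℂ))) * ∫ t : ℝ, bG α β γ σ n t
        * ((-(σ : ℂ) - Complex.I * t) / (y : ℂ)
            * ((π * y : ℝ) : ℂ) ^ (-(σ : ℂ) - Complex.I * t))) y := by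
  have hπy : 0 < π * y := mul_pos Real.pi_pos hy
  have h_meas : ∀ᶠ y' in nhds y, AEStronglyMeasurable
      (fun t : ℝ => bG α β γ σ n t * ((π * y' : ℝ) : ℂ) ^ (-(σ : ℂ) - Complex.I * t)) volume := by
    filter_upwards [eventually_gt_nhds hy] with y' hy'
    exact ((continuous_bG α β γ σ hα hβ hγ hσ n).mul (continuous_w_cpow hy' σ)).aestronglyMeasurable
  have h_int : Integrable
      (fun t : ℝ => bG α β γ σ n t * ((π * y : ℝ) : ℂ) ^ (-(σ : ℂ) - Complex.I * t)) volume :=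
    integrable_bG_mul α β γ σ hα hβ hγ hσ n 0 (continuous_w_cpow hy σ)
      (K := (π * y) ^ (-σ)) (Real.rpow_nonneg hπy.le _)
      (fun t => by rw [norm_cpow_pi_mul hy]; simp)
  have h'_meas : AEStronglyMeasurable
      (fun t : ℝ => bG α β γ σ n t * ((-(σ : ℂ) - Complex.I * t) / (y : ℂ)
          * ((π * y : ℝ) : ℂ) ^ (-(σ : ℂ) - Complex.I * t))) volume := by
    refine ((continuous_bG α β γ σ hα hβ hγ hσ n).mul
      (Continuous.mul (by fun_prop) (continuous_w_cpow hy σ))).aestronglyMeasurable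
  have hb_int : Integrable (fun t : ℝ => ((σ + 1) * (2 / y) * (π * (y / 2)) ^ (-σ))
      * (‖bG α β γ σ n t‖ * (1 + |t|) ^ 1)) volume :=
    (integrable_norm_bG α β γ σ hα hβ hγ hσ n 1).const_mul _
  have h_bound : ∀ᵐ t : ℝ ∂volume, ∀ y' ∈ Metric.ball y (y / 2),
      ‖bG α β γ σ n t * ((-(σ : ℂ) - Complex.I * t) / (y' : ℂ)
          * ((π * y' : ℝ) : ℂ) ^ (-(σ : ℂ) - Complex.I * t))‖
        ≤ ((σ + 1) * (2 / y) * (π * (y / 2)) ^ (-σ))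
            * (‖bG α β γ σ n t‖ * (1 + |t|) ^ 1) := by
    refine ae_of_all _ fun t y' hy' => ?_
    have hlow : y / 2 < y' := by
      have h1 := Metric.mem_ball.mp hy'
      rw [Real.dist_eq] at h1
      have h2 := abs_lt.mp h1
      linarith [h2.1]
    have hy'0 : 0 < y' := lt_trans (half_pos hy) hlow
    have hq : ‖-(σ : ℂ) - Complex.I * t‖ ≤ (σ + 1) * (1 + |t|) := norm_w_le σ t hσ
    have hinv : 1 / y' ≤ 2 / y := by
      have := one_div_le_one_div_of_le (half_pos hy) hlow.le
      calc 1 / y' ≤ 1 / (y / 2) := this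
        _ = 2 / y := by rw [one_div_div]
    have hrpow : (π * y') ^ (-σ) ≤ (π * (y / 2)) ^ (-σ) :=
      Real.rpow_le_rpow_of_nonpos (mul_pos Real.pi_pos (half_pos hy))
        (mul_le_mul_of_nonneg_left hlow.le Real.pi_pos.le) (neg_nonpos.mpr hσ.le)
    have main : ‖-(σ : ℂ) - Complex.I * t‖ * (1 / y') * (π * y') ^ (-σ)
        ≤ ((σ + 1) * (1 + |t|)) * (2 / y) * (π * (y / 2)) ^ (-σ) := by
      have e1 : ‖-(σ : ℂ) - Complex.I * t‖ * (1 / y') ≤ ((σ + 1) * (1 + |t|)) * (2 / y) :=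
        mul_le_mul hq hinv (one_div_nonneg.mpr hy'0.le)
          (mul_nonneg (by linarith) (by positivity))
      exact mul_le_mul e1 hrpow (Real.rpow_nonneg (mul_pos Real.pi_pos hy'0).le _)
        (mul_nonneg (mul_nonneg (by linarith) (by positivity)) (by positivity))
    calc ‖bG α β γ σ n t * ((-(σ : ℂ) - Complex.I * t) / (y' : ℂ)
            * ((π * y' : ℝ) : ℂ) ^ (-(σ : ℂ) - Complex.I * t))‖
        = ‖bG α β γ σ n t‖
            * (‖-(σ : ℂ) - Complex.I * t‖ * (1 / y') * (π * y') ^ (-σ)) := by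
          rw [norm_mul, norm_mul, norm_div, Complex.norm_real, norm_cpow_pi_mul hy'0,
            Real.norm_eq_abs, abs_of_pos hy'0]
          ring
      _ ≤ ‖bG α β γ σ n t‖
            * (((σ + 1) * (1 + |t|)) * (2 / y) * (π * (y / 2)) ^ (-σ)) :=
          mul_le_mul_of_nonneg_left main (norm_nonneg _)
      _ = ((σ + 1) * (2 / y) * (π * (y / 2)) ^ (-σ))
            * (‖bG α β γ σ n t‖ * (1 + |t|) ^ 1) := by
          rw [pow_one]; ring
  have h_diff : ∀ᵐ t : ℝ ∂volume, ∀ y' ∈ Metric.ball y (y / 2),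
      HasDerivAt (fun y'' : ℝ => bG α β γ σ n t
          * ((π * y'' : ℝ) : ℂ) ^ (-(σ : ℂ) - Complex.I * t))
        (bG α β γ σ n t * ((-(σ : ℂ) - Complex.I * t) / (y' : ℂ)
          * ((π * y' : ℝ) : ℂ) ^ (-(σ : ℂ) - Complex.I * t))) y' := by
    refine ae_of_all _ fun t y' hy' => ?_
    have hlow : y / 2 < y' := by
      have h1 := Metric.mem_ball.mp hy'
      rw [Real.dist_eq] at h1
      have h2 := abs_lt.mp h1
      linarith [h2.1]
    have hy'0 : 0 < y' := lt_trans (half_pos hy) hlow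
    exact (hasDerivAt_cpow_pi_mul (-(σ : ℂ) - Complex.I * t) hy'0).const_mul (bG α β γ σ n t)
  have hmain := hasDerivAt_integral_of_dominated_loc_of_deriv_le (μ := volume)
    (Metric.ball_mem_nhds y (half_pos hy)) h_meas h_int h'_meas h_bound hb_int h_diff
  exact hmain.2.const_mul (1 / (2 * (π : ℂ)))

end BarnesRecAux

open BarnesRecAux in
/-- Each `Iₙ` is differentiable on `(0,∞)` and satisfies the recurrence
`I_{n+1}(y) = −(1/2)·(y·Iₙ′(y) + (3α/2 + 2n + 2)·Iₙ(y))`. -/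
theorem barnesI_recurrence (α β γ : ℂ) (hsum : α + β + γ = 0)
    (hα : α.re = 0) (hβ : β.re = 0) (hγ : γ.re = 0) (σ : ℝ) (hσ : 0 < σ) :
    (∀ n : ℕ, ∀ y : ℝ, 0 < y → DifferentiableAt ℝ (barnesI α β γ σ n) y) ∧
    (∀ n : ℕ, ∀ y : ℝ, 0 < y →
      barnesI α β γ σ (n + 1) y
        = -(1 / 2) * ((y : ℂ) * deriv (barnesI α β γ σ n) y
            + (3 * α / 2 + 2 * (n : ℂ) + 2) * barnesI α β γ σ n y)) := by
  constructor
  · intro n y hy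
    exact (barnesI_hasDerivAt α β γ σ hα hβ hγ hσ n hy).differentiableAt
  · intro n y hy
    have hπy : 0 < π * y := mul_pos Real.pi_pos hy
    have hy0 : (y : ℂ) ≠ 0 := by exact_mod_cast hy.ne'
    have hder := (barnesI_hasDerivAt α β γ σ hα hβ hγ hσ n hy).deriv
    have int0 : Integrable
        (fun t : ℝ => bG α β γ σ n t * ((π * y : ℝ) : ℂ) ^ (-(σ : ℂ) - Complex.I * t)) volume :=
      integrable_bG_mul α β γ σ hα hβ hγ hσ n 0 (continuous_w_cpow hy σ)
        (K := (π * y) ^ (-σ)) (Real.rpow_nonneg hπy.le _)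
        (fun t => by rw [norm_cpow_pi_mul hy]; simp)
    have int1 : Integrable
        (fun t : ℝ => bG α β γ σ n t * ((-(σ : ℂ) - Complex.I * t) / (y : ℂ)
          * ((π * y : ℝ) : ℂ) ^ (-(σ : ℂ) - Complex.I * t))) volume := by
      refine integrable_bG_mul α β γ σ hα hβ hγ hσ n 1
        (Continuous.mul (by fun_prop) (continuous_w_cpow hy σ))
        (K := (σ + 1) / y * (π * y) ^ (-σ)) ?_ (fun t => ?_)
      · positivity
      · rw [norm_mul, norm_div, Complex.norm_real, Real.norm_eq_abs, abs_of_pos hy,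
          norm_cpow_pi_mul hy, pow_one]
        have h1 : ‖-(σ : ℂ) - Complex.I * t‖ ≤ (σ + 1) * (1 + |t|) := norm_w_le σ t hσ
        have h2 : (0:ℝ) ≤ (π * y) ^ (-σ) := Real.rpow_nonneg hπy.le _
        calc ‖-(σ : ℂ) - Complex.I * t‖ / y * (π * y) ^ (-σ)
            ≤ (σ + 1) * (1 + |t|) / y * (π * y) ^ (-σ) := by gcongr
          _ = (σ + 1) / y * (π * y) ^ (-σ) * (1 + |t|) := by ring
    have keyint : (∫ t : ℝ, bG α β γ σ (n + 1) t
          * ((π * y : ℝ) : ℂ) ^ (-(σ : ℂ) - Complex.I * t))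
        = -(1 / 2) * ((y : ℂ) * (∫ t : ℝ, bG α β γ σ n t
              * ((-(σ : ℂ) - Complex.I * t) / (y : ℂ)
                * ((π * y : ℝ) : ℂ) ^ (-(σ : ℂ) - Complex.I * t)))
            + (3 * α / 2 + 2 * (n : ℂ) + 2) * (∫ t : ℝ, bG α β γ σ n t
              * ((π * y : ℝ) : ℂ) ^ (-(σ : ℂ) - Complex.I * t))) := by
      rw [← integral_const_mul ((y : ℂ)), ← integral_const_mul (3 * α / 2 + 2 * (n : ℂ) + 2),
        ← integral_add (int1.const_mul _) (int0.const_mul _), ← integral_const_mul (-(1/2 : ℂ))]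
      refine integral_congr_ae (ae_of_all _ fun t => ?_)
      show bG α β γ σ (n + 1) t * _ = _
      rw [bG_succ α β γ σ n t]
      simp only [bA]
      push_cast
      field_simp
      ring
    calc barnesI α β γ σ (n + 1) y
        = (1 / (2 * (π : ℂ))) * ∫ t : ℝ, bG α β γ σ (n + 1) t
            * ((π * y : ℝ) : ℂ) ^ (-(σ : ℂ) - Complex.I * t) := rfl
      _ = (1 / (2 * (π : ℂ))) * (-(1 / 2) * ((y : ℂ) * (∫ t : ℝ, bG α β γ σ n t
              * ((-(σ : ℂ) - Complex.I * t) / (y : ℂ)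
                * ((π * y : ℝ) : ℂ) ^ (-(σ : ℂ) - Complex.I * t)))
            + (3 * α / 2 + 2 * (n : ℂ) + 2) * (∫ t : ℝ, bG α β γ σ n t
              * ((π * y : ℝ) : ℂ) ^ (-(σ : ℂ) - Complex.I * t)))) := by rw [keyint]
      _ = -(1 / 2) * ((y : ℂ) * ((1 / (2 * (π : ℂ))) * ∫ t : ℝ, bG α β γ σ n t
              * ((-(σ : ℂ) - Complex.I * t) / (y : ℂ)
                * ((π * y : ℝ) : ℂ) ^ (-(σ : ℂ) - Complex.I * t)))
            + (3 * α / 2 + 2 * (n : ℂ) + 2) * ((1 / (2 * (π : ℂ))) * ∫ t : ℝ, bG α β γ σ n t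
              * ((π * y : ℝ) : ℂ) ^ (-(σ : ℂ) - Complex.I * t))) := by ring
      _ = -(1 / 2) * ((y : ℂ) * deriv (barnesI α β γ σ n) y
            + (3 * α / 2 + 2 * (n : ℂ) + 2) * barnesI α β γ σ n y) := by rw [hder]; rfl
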